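/- For every finite simple graph G with μ maximal cliques, the Helly bend number of G is at most μ − 1; that is, G admits a Helly EPG representation in which every path has at most μ − 1 bends. -/

import Mathlib

/-- A grid edge: a lattice point together with a direction; `true` means the
horizontal edge from `pt` to `pt + (1,0)`, `false` the vertical edge from `pt`
to `pt + (0,1)`. -/
structure GridEdge where
  pt : ℤ × ℤ
  horiz : Bool
deriving DecidableEq

/-- The two endpoints of a grid edge. -/
def GridEdge.endpoints (e : GridEdge) : Finset (ℤ × ℤ) :=
  {e.pt, if e.horiz then (e.pt.1 + 1, e.pt.2) else (e.pt.1, e.pt.2 + 1)}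

/-- Two distinct grid edges are adjacent when they share an endpoint. -/
def GridEdge.adj (e f : GridEdge) : Prop :=
  e ≠ f ∧ (e.endpoints ∩ f.endpoints).Nonempty

/-- A simple path in the integer grid, given by its sequence of edges:
consecutive edges are adjacent, all edges are distinct, and
non-consecutive edges are non-adjacent. -/
structure GridPath where
  edges : List GridEdge
  nonempty : edges ≠ []
  nodup : edges.Nodup
  chain : edges.Chain' GridEdge.adj
  simple : ∀ i j : ℕ, i + 1 < j → ∀ (hi : i < edges.length) (hj : j < edges.length),
    ¬ GridEdge.adj (edges.get ⟨i, hi⟩) (edges.get ⟨j, hj⟩)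

/-- The number of bends of a grid path: consecutive pairs of edges with
different directions. -/
def GridPath.bends (P : GridPath) : ℕ :=
  ((P.edges.zip P.edges.tail).filter fun q => q.1.horiz != q.2.horiz).length

/-- Two paths (edge-)intersect when they share a grid edge. -/
def GridPath.Inter (P Q : GridPath) : Prop :=
  ∃ e : GridEdge, e ∈ P.edges ∧ e ∈ Q.edges

/-- A relevant edge of a path: an extremity (first or last) edge or a bend edge. -/
def GridPath.IsRelevant (P : GridPath) (e : GridEdge) : Prop :=
  P.edges.head? = some e ∨ P.edges.getLast? = some e ∨
    ∃ q ∈ P.edges.zip P.edges.tail, q.1.horiz ≠ q.2.horiz ∧ (e = q.1 ∨ e = q.2)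

/-- An EPG representation of a graph: vertices are assigned grid paths, and two
distinct vertices are adjacent iff their paths share a grid edge. -/
def IsEPGRep {V : Type*} (G : SimpleGraph V) (P : V → GridPath) : Prop :=
  ∀ u v : V, u ≠ v → (G.Adj u v ↔ (P u).Inter (P v))

/-- The Helly property for a family of grid paths: every pairwise
edge-intersecting subfamily has a grid edge common to all its members. -/
def HellyEPG {ι : Type*} (P : ι → GridPath) : Prop :=
  ∀ T : Set ι, (∀ i ∈ T, ∀ j ∈ T, (P i).Inter (P j)) →
    ∃ e : GridEdge, ∀ i ∈ T, e ∈ (P i).edges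

/-- The set of maximal cliques of a graph. -/
def maxCliques {V : Type*} (G : SimpleGraph V) : Set (Set V) :=
  {s | G.IsClique s ∧ ∀ t : Set V, G.IsClique t → s ⊆ t → s = t}

namespace HellyAux

/-- next point after a move -/
def ptAfter (p : ℤ × ℤ) (b : Bool) : ℤ × ℤ := if b then (p.1 + 1, p.2) else (p.1, p.2 + 1)

def psum (p : ℤ × ℤ) : ℤ := p.1 + p.2

lemma psum_ptAfter (p : ℤ × ℤ) (b : Bool) : psum (ptAfter p b) = psum p + 1 := by
  cases b <;> simp [ptAfter, psum] <;> ring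

def mkEdges : ℤ × ℤ → List Bool → List GridEdge
  | _, [] => []
  | p, b :: bs => ⟨p, b⟩ :: mkEdges (ptAfter p b) bs

@[simp] lemma mkEdges_nil (p : ℤ × ℤ) : mkEdges p [] = [] := rfl

@[simp] lemma mkEdges_cons (p : ℤ × ℤ) (b : Bool) (bs : List Bool) :
    mkEdges p (b :: bs) = ⟨p, b⟩ :: mkEdges (ptAfter p b) bs := rfl

@[simp] lemma mkEdges_length (p : ℤ × ℤ) (bs : List Bool) :
    (mkEdges p bs).length = bs.length := by
  induction bs generalizing p with
  | nil => rfl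
  | cons b bs ih => simp [ih]

lemma endpoints_eq (p : ℤ × ℤ) (b : Bool) :
    (GridEdge.mk p b).endpoints = {p, ptAfter p b} := by
  cases b <;> rfl

lemma mem_endpoints_psum {q : ℤ × ℤ} {e : GridEdge} (h : q ∈ e.endpoints) :
    psum q = psum e.pt ∨ psum q = psum e.pt + 1 := by
  obtain ⟨p, b⟩ := e
  rw [endpoints_eq] at h
  rcases Finset.mem_insert.1 h with h | h
  · left; rw [h]
  · right; rw [Finset.mem_singleton.1 h, psum_ptAfter]

lemma mkEdges_get_psum (bs : List Bool) (p : ℤ × ℤ) (i : ℕ)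
    (h : i < (mkEdges p bs).length) :
    psum ((mkEdges p bs).get ⟨i, h⟩).pt = psum p + i := by
  induction bs generalizing p i with
  | nil => simp at h
  | cons b bs ih =>
    cases i with
    | zero => simp
    | succ i =>
      have h' : i < (mkEdges (ptAfter p b) bs).length := by
        simpa using Nat.lt_of_succ_lt_succ (by simpa using h)
      have := ih (ptAfter p b) i h'
      simp only [mkEdges_cons, List.get_eq_getElem, List.getElem_cons_succ] at this ⊢
      rw [this, psum_ptAfter]
      push_cast; ring

lemma mkEdges_psum_mem {e : GridEdge} {p : ℤ × ℤ} {bs : List Bool}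
    (h : e ∈ mkEdges p bs) : psum p ≤ psum e.pt := by
  induction bs generalizing p with
  | nil => simp at h
  | cons b bs ih =>
    rcases List.mem_cons.1 h with rfl | h
    · exact le_refl _
    · have := ih h
      rw [psum_ptAfter] at this
      omega

lemma mkEdges_nodup (p : ℤ × ℤ) (bs : List Bool) : (mkEdges p bs).Nodup := by
  induction bs generalizing p with
  | nil => simp
  | cons b bs ih =>
    simp only [mkEdges_cons, List.nodup_cons]
    refine ⟨fun hmem => ?_, ih _⟩
    have := mkEdges_psum_mem hmem
    rw [psum_ptAfter] at this
    simp only at this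
    omega

lemma adj_consec (p : ℤ × ℤ) (b b' : Bool) :
    GridEdge.adj ⟨p, b⟩ ⟨ptAfter p b, b'⟩ := by
  constructor
  · intro h
    have : p = ptAfter p b := congrArg GridEdge.pt h
    have h2 := psum_ptAfter p b
    rw [← this] at h2
    omega
  · refine ⟨ptAfter p b, Finset.mem_inter.2 ⟨?_, ?_⟩⟩
    · rw [endpoints_eq]; simp
    · rw [endpoints_eq]; simp

lemma mkEdges_chain (p : ℤ × ℤ) (bs : List Bool) : (mkEdges p bs).Chain' GridEdge.adj := by
  induction bs generalizing p with
  | nil => simp [List.Chain']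
  | cons b bs ih =>
    cases bs with
    | nil => simp [List.Chain']
    | cons b' bs' =>
      simp only [mkEdges_cons]
      exact List.IsChain.cons_cons (adj_consec p b b') (by simpa [List.Chain'] using ih (ptAfter p b))

lemma mkEdges_simple (p : ℤ × ℤ) (bs : List Bool) :
    ∀ i j : ℕ, i + 1 < j → ∀ (hi : i < (mkEdges p bs).length) (hj : j < (mkEdges p bs).length),
      ¬ GridEdge.adj ((mkEdges p bs).get ⟨i, hi⟩) ((mkEdges p bs).get ⟨j, hj⟩) := by
  intro i j hij hi hj hadj
  obtain ⟨-, q, hq⟩ := hadj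
  have hq1 := mem_endpoints_psum (Finset.mem_inter.1 hq).1
  have hq2 := mem_endpoints_psum (Finset.mem_inter.1 hq).2
  rw [mkEdges_get_psum bs p i hi] at hq1
  rw [mkEdges_get_psum bs p j hj] at hq2
  omega

def mkPath (p : ℤ × ℤ) (bs : List Bool) (h : bs ≠ []) : GridPath where
  edges := mkEdges p bs
  nonempty := by
    cases bs with
    | nil => exact absurd rfl h
    | cons b bs => simp
  nodup := mkEdges_nodup p bs
  chain := mkEdges_chain p bs
  simple := mkEdges_simple p bs

@[simp] lemma mkPath_edges (p : ℤ × ℤ) (bs : List Bool) (h : bs ≠ []) :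
    (mkPath p bs h).edges = mkEdges p bs := rfl

end HellyAux
namespace HellyAux

/-! ### walk, append, replicate -/

def walk (p : ℤ × ℤ) (bs : List Bool) : ℤ × ℤ := bs.foldl ptAfter p

@[simp] lemma walk_nil (p : ℤ × ℤ) : walk p [] = p := rfl
@[simp] lemma walk_cons (p : ℤ × ℤ) (b : Bool) (bs : List Bool) :
    walk p (b :: bs) = walk (ptAfter p b) bs := rfl

lemma mkEdges_append (p : ℤ × ℤ) (l₁ l₂ : List Bool) :
    mkEdges p (l₁ ++ l₂) = mkEdges p l₁ ++ mkEdges (walk p l₁) l₂ := by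
  induction l₁ generalizing p with
  | nil => simp
  | cons b bs ih => simp [ih]

@[simp] lemma walk_append (p : ℤ × ℤ) (l₁ l₂ : List Bool) :
    walk p (l₁ ++ l₂) = walk (walk p l₁) l₂ := by
  simp [walk, List.foldl_append]

lemma walk_replicate_true (p : ℤ × ℤ) (n : ℕ) :
    walk p (List.replicate n true) = (p.1 + n, p.2) := by
  induction n generalizing p with
  | zero => simp
  | succ n ih =>
    rw [List.replicate_succ, walk_cons, ih]
    simp [ptAfter]
    ring

lemma walk_replicate_false (p : ℤ × ℤ) (n : ℕ) :
    walk p (List.replicate n false) = (p.1, p.2 + n) := by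
  induction n generalizing p with
  | zero => simp
  | succ n ih =>
    rw [List.replicate_succ, walk_cons, ih]
    simp [ptAfter]
    ring

lemma mem_mkEdges_replicate {e : GridEdge} {p : ℤ × ℤ} {n : ℕ} {b : Bool}
    (h : e ∈ mkEdges p (List.replicate n b)) :
    e.horiz = b ∧ (b = true → e.pt.2 = p.2) ∧ (b = false → e.pt.1 = p.1) := by
  induction n generalizing p with
  | zero => simp at h
  | succ n ih =>
    rw [List.replicate_succ, mkEdges_cons] at h
    rcases List.mem_cons.1 h with rfl | h
    · exact ⟨rfl, fun _ => rfl, fun _ => rfl⟩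
    · have := ih h
      cases b <;> simp_all [ptAfter]

/-! ### flips -/

def flips : List Bool → ℕ
  | [] => 0
  | [_] => 0
  | a :: b :: t => (if a = b then 0 else 1) + flips (b :: t)

@[simp] lemma flips_nil : flips [] = 0 := rfl
@[simp] lemma flips_single (b : Bool) : flips [b] = 0 := rfl
lemma flips_cons_cons (a b : Bool) (t : List Bool) :
    flips (a :: b :: t) = (if a = b then 0 else 1) + flips (b :: t) := rfl

lemma flips_cons_le (a : Bool) (t : List Bool) : flips (a :: t) ≤ 1 + flips t := by
  cases t with
  | nil => simp
  | cons b t => rw [flips_cons_cons]; split <;> omega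

lemma flips_append_le (l₁ l₂ : List Bool) : flips (l₁ ++ l₂) ≤ flips l₁ + flips l₂ + 1 := by
  induction l₁ with
  | nil => simp
  | cons a t ih =>
    cases t with
    | nil =>
      have := flips_cons_le a l₂
      simpa [Nat.add_comm] using Nat.le_trans this (by omega)
    | cons b t =>
      have : flips ((a :: b :: t) ++ l₂) = (if a = b then 0 else 1) + flips ((b :: t) ++ l₂) := rfl
      rw [this, flips_cons_cons]
      omega

lemma flips_append_cons (l : List Bool) (c : Bool) (t : List Bool) :
    flips (l ++ c :: t) = flips (l ++ [c]) + flips (c :: t) := by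
  induction l with
  | nil => simp
  | cons a l ih =>
    cases l with
    | nil => simp [flips_cons_cons]
    | cons b l =>
      have h1 : flips ((a :: b :: l) ++ c :: t)
          = (if a = b then 0 else 1) + flips ((b :: l) ++ c :: t) := rfl
      have h2 : flips ((a :: b :: l) ++ [c]) = (if a = b then 0 else 1) + flips ((b :: l) ++ [c]) := rfl
      rw [h1, h2, ih]
      omega

@[simp] lemma flips_replicate (n : ℕ) (b : Bool) : flips (List.replicate n b) = 0 := by
  induction n with
  | zero => rfl
  | succ n ih =>
    cases n with
    | zero => rfl
    | succ m =>
      rw [List.replicate_succ, List.replicate_succ, flips_cons_cons]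
      rw [List.replicate_succ] at ih
      simpa using ih

/-- bends of mkPath = flips of direction list -/
def bcount (l : List GridEdge) : ℕ :=
  ((l.zip l.tail).filter fun q => q.1.horiz != q.2.horiz).length

lemma bcount_mkEdges (p : ℤ × ℤ) (bs : List Bool) : bcount (mkEdges p bs) = flips bs := by
  induction bs generalizing p with
  | nil => rfl
  | cons a t ih =>
    cases t with
    | nil => rfl
    | cons b t =>
      have := ih (ptAfter p a)
      simp only [mkEdges_cons] at this ⊢
      rw [flips_cons_cons, ← this]
      simp only [bcount, List.zip_cons_cons, List.tail_cons, List.filter_cons]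
      cases a <;> cases b <;> simp <;> omega

lemma mkPath_bends (p : ℤ × ℤ) (bs : List Bool) (h : bs ≠ []) :
    (mkPath p bs h).bends = flips bs := by
  have : (mkPath p bs h).bends = bcount (mkEdges p bs) := rfl
  rw [this, bcount_mkEdges]

end HellyAux
namespace HellyAux

def dirOf (a : ℕ) : Bool := a % 2 == 0

def blk (D s a b : ℕ) : List Bool :=
  if dirOf a = dirOf b then
    List.replicate s (dirOf a) ++ List.replicate (D * (b - a)) (!dirOf a)
      ++ List.replicate (D * (b - a) - s) (dirOf a)
  else
    List.replicate (D * (b - a)) (dirOf a) ++ List.replicate (D * (b - a)) (dirOf b)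

def route (D s : ℕ) : List ℕ → List Bool
  | [] => [true]
  | [a] => [dirOf a]
  | a :: b :: l => blk D s a b ++ route D s (b :: l)

def cpt (D a : ℕ) : ℤ × ℤ := ((D * a : ℕ), (D * a : ℕ))

def cliqueEdge (D a : ℕ) : GridEdge := ⟨cpt D a, dirOf a⟩

lemma rep_eq_cons {n : ℕ} (hn : 1 ≤ n) (d : Bool) :
    List.replicate n d = d :: List.replicate (n - 1) d := by
  cases n with
  | zero => omega
  | succ m => simp [List.replicate_succ]

lemma blk_eq_cons {D s a b : ℕ} (hs : 1 ≤ s) (hD : 1 ≤ D) (hab : a < b) :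
    ∃ t, blk D s a b = dirOf a :: t := by
  have hg : 1 ≤ D * (b - a) := by
    have : 1 ≤ b - a := by omega
    calc 1 ≤ D * 1 := by omega
    _ ≤ D * (b - a) := Nat.mul_le_mul_left D this
  unfold blk
  split
  · rw [rep_eq_cons hs]
    exact ⟨_, rfl⟩
  · rw [rep_eq_cons hg]
    exact ⟨_, rfl⟩

lemma route_eq_cons {D s : ℕ} (hs : 1 ≤ s) (hD : 1 ≤ D) :
    ∀ (a : ℕ) (l : List ℕ), (a :: l).Chain' (· < ·) →
      ∃ t, route D s (a :: l) = dirOf a :: t := by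
  intro a l hchain
  cases l with
  | nil => exact ⟨[], rfl⟩
  | cons b l =>
    have hab : a < b := (List.isChain_cons_cons.1 hchain).1
    obtain ⟨t, ht⟩ := blk_eq_cons hs hD hab
    exact ⟨t ++ route D s (b :: l), by simp [route, ht]⟩

lemma route_ne_nil (D s : ℕ) (l : List ℕ) : route D s l ≠ [] := by
  match l with
  | [] => simp [route]
  | [a] => simp [route]
  | a :: b :: l =>
    simp only [route]
    intro h
    rcases List.append_eq_nil_iff.1 h with ⟨-, h2⟩
    exact route_ne_nil D s (b :: l) h2

lemma walk_blk {D s a b : ℕ} (p : ℤ × ℤ) (hab : a < b) (hsD : s < D) :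
    walk p (blk D s a b) = (p.1 + (D * (b - a) : ℕ), p.2 + (D * (b - a) : ℕ)) := by
  have hsg : s ≤ D * (b - a) := by
    have h1 : 1 ≤ b - a := by omega
    calc s ≤ D := le_of_lt hsD
    _ = D * 1 := by ring
    _ ≤ D * (b - a) := Nat.mul_le_mul_left D h1
  unfold blk
  split
  · cases h : dirOf a <;>
      simp only [h, Bool.not_true, Bool.not_false, walk_append, walk_replicate_true,
        walk_replicate_false] <;>
      refine Prod.ext ?_ ?_ <;> simp <;> omega
  · rcases Bool.eq_false_or_eq_true (dirOf a) with h1 | h1 <;>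
    rcases Bool.eq_false_or_eq_true (dirOf b) with h2 | h2 <;>
    simp only [h1, h2, walk_append, walk_replicate_true, walk_replicate_false] <;>
    first
      | (exfalso; simp [h1, h2] at *)
      | (refine Prod.ext ?_ ?_ <;> simp <;> omega)

lemma walk_cpt {D s a b : ℕ} (hab : a < b) (hsD : s < D) :
    walk (cpt D a) (blk D s a b) = cpt D b := by
  rw [walk_blk (cpt D a) hab hsD]
  unfold cpt
  refine Prod.ext ?_ ?_ <;> simp <;> push_cast <;> ring_nf <;>
    rw [Nat.cast_sub (le_of_lt hab)] <;> ring

lemma run_own {e : GridEdge} {q : ℤ × ℤ} {n : ℕ} {b : Bool}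
    (h : e ∈ mkEdges q (List.replicate n b)) :
    (e.horiz = true → e.pt.2 = q.2) ∧ (e.horiz = false → e.pt.1 = q.1) := by
  have := mem_mkEdges_replicate h
  cases b
  · exact ⟨fun hh => by simp_all, fun _ => this.2.2 rfl⟩
  · exact ⟨fun _ => this.2.1 rfl, fun hh => by simp_all⟩

lemma blk_own {D s a b : ℕ} (hab : a < b) (hsD : s < D) {e : GridEdge}
    (he : e ∈ mkEdges (cpt D a) (blk D s a b)) :
    (e.horiz = true →
      e.pt.2 = ((D * a : ℕ) : ℤ) ∨ e.pt.2 = ((D * a : ℕ) : ℤ) + ((D * (b - a) : ℕ) : ℤ)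
        ∨ e.pt.2 = ((D * a : ℕ) : ℤ) + (s : ℤ)) ∧
    (e.horiz = false →
      e.pt.1 = ((D * a : ℕ) : ℤ) ∨ e.pt.1 = ((D * a : ℕ) : ℤ) + ((D * (b - a) : ℕ) : ℤ)
        ∨ e.pt.1 = ((D * a : ℕ) : ℤ) + (s : ℤ)) := by
  have hcpt1 : (cpt D a).1 = ((D * a : ℕ) : ℤ) := rfl
  have hcpt2 : (cpt D a).2 = ((D * a : ℕ) : ℤ) := rfl
  unfold blk at he
  split at he
  · simp only [mkEdges_append, List.mem_append, walk_append] at he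
    rcases he with (he | he) | he
    · have h := run_own he
      rw [hcpt1, hcpt2] at h
      exact ⟨fun hh => Or.inl (h.1 hh), fun hh => Or.inl (h.2 hh)⟩
    · have h := run_own he
      cases hd : dirOf a
      · rw [hd, walk_replicate_false, hcpt1, hcpt2] at h
        simp only at h
        exact ⟨fun hh => Or.inr (Or.inr (by rw [h.1 hh])),
               fun hh => Or.inl (by rw [h.2 hh])⟩
      · rw [hd, walk_replicate_true, hcpt1, hcpt2] at h
        simp only at h
        exact ⟨fun hh => Or.inl (by rw [h.1 hh]),
               fun hh => Or.inr (Or.inr (by rw [h.2 hh]))⟩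
    · have h := run_own he
      cases hd : dirOf a
      · rw [hd, Bool.not_false, walk_replicate_false, hcpt1, hcpt2] at h
        rw [walk_replicate_true] at h
        simp only at h
        exact ⟨fun hh => Or.inr (Or.inr (by rw [h.1 hh])),
               fun hh => Or.inr (Or.inl (by rw [h.2 hh]))⟩
      · rw [hd, Bool.not_true, walk_replicate_true, hcpt1, hcpt2] at h
        rw [walk_replicate_false] at h
        simp only at h
        exact ⟨fun hh => Or.inr (Or.inl (by rw [h.1 hh])),
               fun hh => Or.inr (Or.inr (by rw [h.2 hh]))⟩
  · simp only [mkEdges_append, List.mem_append, walk_append] at he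
    rcases he with he | he
    · have h := run_own he
      rw [hcpt1, hcpt2] at h
      exact ⟨fun hh => Or.inl (h.1 hh), fun hh => Or.inl (h.2 hh)⟩
    · have h := run_own he
      cases hd : dirOf a
      · rw [hd, walk_replicate_false, hcpt1, hcpt2] at h
        simp only at h
        exact ⟨fun hh => Or.inr (Or.inl (by rw [h.1 hh])),
               fun hh => Or.inl (by rw [h.2 hh])⟩
      · rw [hd, walk_replicate_true, hcpt1, hcpt2] at h
        simp only at h
        exact ⟨fun hh => Or.inl (by rw [h.1 hh]),
               fun hh => Or.inr (Or.inl (by rw [h.2 hh]))⟩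

end HellyAux
namespace HellyAux

lemma route_own {D s : ℕ} (hsD : s < D) :
    ∀ (a : ℕ) (l : List ℕ), (a :: l).Chain' (· < ·) →
      ∀ e ∈ mkEdges (cpt D a) (route D s (a :: l)),
        (e.horiz = true →
          (∃ c ∈ a :: l, e.pt.2 = ((D * c : ℕ) : ℤ)) ∨
          (∃ c ∈ a :: l, e.pt.2 = ((D * c : ℕ) : ℤ) + (s : ℤ))) ∧
        (e.horiz = false →
          (∃ c ∈ a :: l, e.pt.1 = ((D * c : ℕ) : ℤ)) ∨
          (∃ c ∈ a :: l, e.pt.1 = ((D * c : ℕ) : ℤ) + (s : ℤ))) := by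
  intro a l
  induction l generalizing a with
  | nil =>
    intro _ e he
    simp only [route, mkEdges_cons, mkEdges_nil, List.mem_singleton] at he
    subst he
    constructor <;> intro _ <;> exact Or.inl ⟨a, by simp, rfl⟩
  | cons b l ih =>
    intro hchain e he
    have hab : a < b := (List.isChain_cons_cons.1 hchain).1
    have hchain' : (b :: l).Chain' (· < ·) := (List.isChain_cons_cons.1 hchain).2
    have hroute : route D s (a :: b :: l) = blk D s a b ++ route D s (b :: l) := rfl
    rw [hroute, mkEdges_append, walk_cpt hab hsD] at he
    have hDb : ((D * a : ℕ) : ℤ) + ((D * (b - a) : ℕ) : ℤ) = ((D * b : ℕ) : ℤ) := by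
      push_cast [Nat.cast_sub (le_of_lt hab)]
      ring
    rcases List.mem_append.1 he with he | he
    · have h := blk_own hab hsD he
      constructor <;> intro hh
      · rcases h.1 hh with h' | h' | h'
        · exact Or.inl ⟨a, by simp, h'⟩
        · exact Or.inl ⟨b, by simp, by rw [h', hDb]⟩
        · exact Or.inr ⟨a, by simp, h'⟩
      · rcases h.2 hh with h' | h' | h'
        · exact Or.inl ⟨a, by simp, h'⟩
        · exact Or.inl ⟨b, by simp, by rw [h', hDb]⟩
        · exact Or.inr ⟨a, by simp, h'⟩
    · have h := ih b hchain' e he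
      constructor <;> intro hh
      · rcases h.1 hh with ⟨c, hc, h'⟩ | ⟨c, hc, h'⟩
        · exact Or.inl ⟨c, by simp [List.mem_cons.1 hc], h'⟩
        · exact Or.inr ⟨c, by simp [List.mem_cons.1 hc], h'⟩
      · rcases h.2 hh with ⟨c, hc, h'⟩ | ⟨c, hc, h'⟩
        · exact Or.inl ⟨c, by simp [List.mem_cons.1 hc], h'⟩
        · exact Or.inr ⟨c, by simp [List.mem_cons.1 hc], h'⟩

lemma route_cover {D s : ℕ} (hs : 1 ≤ s) (hsD : s < D) :
    ∀ (a : ℕ) (l : List ℕ), (a :: l).Chain' (· < ·) →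
      ∀ c ∈ a :: l, cliqueEdge D c ∈ mkEdges (cpt D a) (route D s (a :: l)) := by
  intro a l
  have hD : 1 ≤ D := by omega
  induction l generalizing a with
  | nil =>
    intro _ c hc
    simp only [List.mem_singleton] at hc
    subst hc
    simp [route, cliqueEdge]
  | cons b l ih =>
    intro hchain c hc
    have hab : a < b := (List.isChain_cons_cons.1 hchain).1
    have hchain' : (b :: l).Chain' (· < ·) := (List.isChain_cons_cons.1 hchain).2
    have hroute : route D s (a :: b :: l) = blk D s a b ++ route D s (b :: l) := rfl
    rw [hroute, mkEdges_append, walk_cpt hab hsD]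
    rcases List.mem_cons.1 hc with rfl | hc
    · obtain ⟨t, ht⟩ := blk_eq_cons hs hD hab
      rw [ht, mkEdges_cons]
      exact List.mem_append_left _ List.mem_cons_self
    · exact List.mem_append_right _ (ih b hchain' c hc)

lemma chain'_le_getLast : ∀ (b : ℕ) (l : List ℕ), (b :: l).Chain' (· < ·) →
    b ≤ (b :: l).getLast (List.cons_ne_nil _ _) := by
  intro b l
  induction l generalizing b with
  | nil => intro _; simp
  | cons c l ih =>
    intro hchain
    have hbc : b < c := (List.isChain_cons_cons.1 hchain).1
    have := ih c (List.isChain_cons_cons.1 hchain).2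
    rw [List.getLast_cons (List.cons_ne_nil _ _)]
    omega

lemma dirOf_eq_iff (a b : ℕ) : dirOf a = dirOf b ↔ a % 2 = b % 2 := by
  unfold dirOf
  rcases Nat.mod_two_eq_zero_or_one a with h1 | h1 <;>
    rcases Nat.mod_two_eq_zero_or_one b with h2 | h2 <;> simp [h1, h2]

lemma flips_two (x y : Bool) (n1 n2 : ℕ) :
    flips (List.replicate n1 x ++ List.replicate n2 y) ≤ 1 := by
  have := flips_append_le (List.replicate n1 x) (List.replicate n2 y)
  simpa using this

lemma flips_three (x y z : Bool) (n1 n2 n3 : ℕ) :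
    flips (List.replicate n1 x ++ (List.replicate n2 y ++ List.replicate n3 z)) ≤ 2 := by
  have h1 := flips_append_le (List.replicate n1 x)
    (List.replicate n2 y ++ List.replicate n3 z)
  have h2 := flips_two y z n2 n3
  simp only [flips_replicate] at h1
  omega

lemma flips_blk_le {D s a b : ℕ} (hab : a < b) (hs : 1 ≤ s) (hsD : s < D) :
    flips (blk D s a b ++ [dirOf b]) ≤ b - a := by
  unfold blk
  split
  · rename_i hpar
    have hba : 2 ≤ b - a := by
      have := (dirOf_eq_iff a b).1 hpar
      omega
    rw [← hpar]
    have hrw : List.replicate (D * (b - a) - s) (dirOf a) ++ [dirOf a]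
        = List.replicate (D * (b - a) - s + 1) (dirOf a) := List.replicate_succ'.symm
    calc flips ((List.replicate s (dirOf a) ++ List.replicate (D * (b - a)) (!dirOf a) ++
            List.replicate (D * (b - a) - s) (dirOf a)) ++ [dirOf a])
        = flips (List.replicate s (dirOf a) ++ (List.replicate (D * (b - a)) (!dirOf a) ++
            List.replicate (D * (b - a) - s + 1) (dirOf a))) := by
          rw [← hrw]; simp [List.append_assoc]
      _ ≤ 2 := flips_three _ _ _ _ _ _
      _ ≤ b - a := hba
  · rename_i hpar
    have hrw : List.replicate (D * (b - a)) (dirOf b) ++ [dirOf b]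
        = List.replicate (D * (b - a) + 1) (dirOf b) := List.replicate_succ'.symm
    calc flips ((List.replicate (D * (b - a)) (dirOf a) ++ List.replicate (D * (b - a)) (dirOf b))
            ++ [dirOf b])
        = flips (List.replicate (D * (b - a)) (dirOf a) ++
            List.replicate (D * (b - a) + 1) (dirOf b)) := by
          rw [← hrw]; simp [List.append_assoc]
      _ ≤ 1 := flips_two _ _ _ _
      _ ≤ b - a := by omega

lemma flips_route_le {D s : ℕ} (hs : 1 ≤ s) (hsD : s < D) :
    ∀ (a : ℕ) (l : List ℕ), (a :: l).Chain' (· < ·) →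
      flips (route D s (a :: l)) ≤ (a :: l).getLast (List.cons_ne_nil _ _) - a := by
  intro a l
  have hD : 1 ≤ D := by omega
  induction l generalizing a with
  | nil => intro _; simp [route]
  | cons b l ih =>
    intro hchain
    have hab : a < b := (List.isChain_cons_cons.1 hchain).1
    have hchain' : (b :: l).Chain' (· < ·) := (List.isChain_cons_cons.1 hchain).2
    obtain ⟨t, ht⟩ := route_eq_cons hs hD b l hchain'
    have hroute : route D s (a :: b :: l) = blk D s a b ++ route D s (b :: l) := rfl
    rw [hroute, ht, flips_append_cons]
    have h1 : flips (blk D s a b ++ [dirOf b]) ≤ b - a := flips_blk_le hab hs hsD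
    have h2 : flips (dirOf b :: t) ≤ (b :: l).getLast (List.cons_ne_nil _ _) - b := by
      rw [← ht]; exact ih b hchain'
    have h3 : b ≤ (b :: l).getLast (List.cons_ne_nil _ _) := chain'_le_getLast b l hchain'
    have h4 : (a :: b :: l).getLast (List.cons_ne_nil _ _)
        = (b :: l).getLast (List.cons_ne_nil _ _) := by
      rw [List.getLast_cons (List.cons_ne_nil _ _)]
    rw [h4]
    omega

end HellyAux
namespace HellyAux

lemma key_arith {D c c' x y : ℕ} (hx : x < D) (hy : y < D) (h : D * c + x = D * c' + y) :
    x = y := by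
  rcases lt_trichotomy c c' with hcc | rfl | hcc
  · have h2 : D * (c + 1) ≤ D * c' := Nat.mul_le_mul_left _ hcc
    rw [Nat.mul_succ] at h2
    omega
  · omega
  · have h2 : D * (c' + 1) ≤ D * c := Nat.mul_le_mul_left _ hcc
    rw [Nat.mul_succ] at h2
    omega

lemma exists_maxClique {V : Type*} [Fintype V] (G : SimpleGraph V) (t : Set V)
    (ht : G.IsClique t) : ∃ s ∈ maxCliques G, t ⊆ s := by
  classical
  have hfin : {u : Set V | G.IsClique u ∧ t ⊆ u}.Finite := Set.toFinite _
  have hne : {u : Set V | G.IsClique u ∧ t ⊆ u}.Nonempty := ⟨t, ht, subset_rfl⟩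
  obtain ⟨s, hs, hmax⟩ := Set.Finite.exists_maximalFor id _ hfin hne
  refine ⟨s, ⟨hs.1, fun u hu hsu => ?_⟩, hs.2⟩
  exact le_antisymm hsu (hmax ⟨hu, hs.2.trans hsu⟩ hsu)

lemma isClique_pair' {V : Type*} (G : SimpleGraph V) {u v : V} (h : G.Adj u v) :
    G.IsClique {u, v} := by
  intro x hx y hy hxy
  rcases hx with rfl | hx
  · rcases hy with rfl | hy
    · exact absurd rfl hxy
    · rw [Set.mem_singleton_iff] at hy; subst hy; exact h
  · rw [Set.mem_singleton_iff] at hx; subst hx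
    rcases hy with rfl | hy
    · exact h.symm
    · rw [Set.mem_singleton_iff] at hy; subst hy; exact absurd rfl hxy

end HellyAux
namespace HellyAux
def coordOf (e : GridEdge) : ℤ := if e.horiz then e.pt.2 else e.pt.1
end HellyAux
open HellyAux

/-- Every finite graph with `μ` maximal cliques has a Helly EPG representation
in which every path has at most `μ - 1` bends. -/
theorem helly_bend_number_le_mu_sub_one {V : Type*} [Fintype V] (G : SimpleGraph V) :
    ∃ P : V → GridPath, IsEPGRep G P ∧ HellyEPG P ∧
      ∀ v : V, (P v).bends ≤ (maxCliques G).ncard - 1 := by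
  classical
  have hfin : (maxCliques G).Finite := Set.toFinite _
  set μ := (maxCliques G).ncard with hμdef
  set cl : List (Set V) := hfin.toFinset.toList with hcl
  have hlen : cl.length = μ := by
    rw [hcl, Finset.length_toList, hμdef, Set.ncard_eq_toFinset_card _ hfin]
  have hmemM : ∀ {C : Set V}, C ∈ cl ↔ C ∈ maxCliques G := by
    intro C; rw [hcl, Finset.mem_toList, Set.Finite.mem_toFinset]
  set Cl : ℕ → Set V := fun i => cl.getD i ∅ with hCl
  have hClM : ∀ i, i < μ → Cl i ∈ maxCliques G := by
    intro i hi
    have hi' : i < cl.length := by omega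
    have : cl.getD i ∅ = cl[i] := List.getD_eq_getElem cl ∅ hi'
    rw [hCl]
    simp only [this]
    exact hmemM.1 (List.getElem_mem _)
  have hidx : ∀ C ∈ maxCliques G, ∃ i, i < μ ∧ Cl i = C := by
    intro C hC
    obtain ⟨i, hi, hig⟩ := List.mem_iff_getElem.1 (hmemM.2 hC)
    exact ⟨i, by omega, by rw [hCl]; simp only [List.getD_eq_getElem cl ∅ hi]; exact hig⟩
  set D : ℕ := Fintype.card V + 3 with hD
  set sv : V → ℕ := fun v => 2 + ((Fintype.equivFin V) v : ℕ) with hsv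
  have hsv2 : ∀ v, 2 ≤ sv v := fun v => by simp only [hsv]; omega
  have hsv1 : ∀ v, 1 ≤ sv v := fun v => by have := hsv2 v; omega
  have hsvD : ∀ v, sv v < D := by
    intro v
    have := ((Fintype.equivFin V) v).isLt
    simp only [hsv, hD]
    omega
  have hsvinj : ∀ u v : V, sv u = sv v → u = v := by
    intro u v h
    simp only [hsv] at h
    have h2 : (((Fintype.equivFin V) u : Fin (Fintype.card V)) : ℕ)
        = (((Fintype.equivFin V) v : Fin (Fintype.card V)) : ℕ) := by omega
    exact (Fintype.equivFin V).injective (Fin.val_injective h2)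
  set A : V → Finset ℕ := fun v => (Finset.range μ).filter (fun i => v ∈ Cl i) with hA
  set lv : V → List ℕ := fun v => (A v).sort (· ≤ ·) with hlv
  have hmem_lv : ∀ v i, i ∈ lv v ↔ i < μ ∧ v ∈ Cl i := by
    intro v i
    rw [hlv]
    simp [Finset.mem_sort, hA, Finset.mem_filter, Finset.mem_range]
  have hchain : ∀ v, (lv v).Chain' (· < ·) := by
    intro v
    have hsorted : (lv v).SortedLT := Finset.sortedLT_sort _
    exact hsorted.isChain
  have hlv_ne : ∀ v, lv v ≠ [] := by
    intro v
    obtain ⟨C, hC, hvC⟩ := exists_maxClique G {v} (Set.pairwise_singleton v G.Adj)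
    obtain ⟨i, hi, hieq⟩ := hidx C hC
    intro hnil
    have : i ∈ lv v := (hmem_lv v i).2 ⟨hi, by rw [hieq]; exact hvC rfl⟩
    rw [hnil] at this
    simp at this
  set P : V → GridPath :=
    fun v => mkPath (cpt D ((lv v).headI)) (route D (sv v) (lv v)) (route_ne_nil _ _ _) with hP
  have hedges : ∀ v, (P v).edges = mkEdges (cpt D ((lv v).headI)) (route D (sv v) (lv v)) :=
    fun v => rfl
  -- coverage
  have hcov : ∀ v c, c ∈ lv v → cliqueEdge D c ∈ (P v).edges := by
    intro v c hc
    rw [hedges]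
    obtain ⟨a, t, hat⟩ : ∃ a t, lv v = a :: t := by
      cases h : lv v with
      | nil => exact absurd h (hlv_ne v)
      | cons a t => exact ⟨a, t, rfl⟩
    rw [hat]
    simp only [List.headI]
    exact route_cover (hsv1 v) (hsvD v) a t (by rw [← hat]; exact hchain v) c (by rw [← hat]; exact hc)
  -- ownership
  have hown : ∀ v e, e ∈ (P v).edges →
      (e.horiz = true →
        (∃ c ∈ lv v, e.pt.2 = ((D * c : ℕ) : ℤ)) ∨
        (∃ c ∈ lv v, e.pt.2 = ((D * c : ℕ) : ℤ) + (sv v : ℤ))) ∧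
      (e.horiz = false →
        (∃ c ∈ lv v, e.pt.1 = ((D * c : ℕ) : ℤ)) ∨
        (∃ c ∈ lv v, e.pt.1 = ((D * c : ℕ) : ℤ) + (sv v : ℤ))) := by
    intro v e he
    rw [hedges] at he
    obtain ⟨a, t, hat⟩ : ∃ a t, lv v = a :: t := by
      cases h : lv v with
      | nil => exact absurd h (hlv_ne v)
      | cons a t => exact ⟨a, t, rfl⟩
    rw [hat] at he ⊢
    simp only [List.headI] at he
    exact route_own (hsvD v) a t (by rw [← hat]; exact hchain v) e he
  have hown2 : ∀ v e, e ∈ (P v).edges →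
      (∃ c ∈ lv v, coordOf e = ((D * c : ℕ) : ℤ)) ∨
      (∃ c ∈ lv v, coordOf e = ((D * c : ℕ) : ℤ) + (sv v : ℤ)) := by
    intro v e he
    have h := hown v e he
    rcases Bool.eq_false_or_eq_true e.horiz with hb | hb
    · unfold coordOf
      rw [hb]
      simpa using h.1 hb
    · unfold coordOf
      rw [hb]
      simpa using h.2 hb
  -- Inter implies Adj
  have hinter_adj : ∀ u v : V, u ≠ v → (P u).Inter (P v) → G.Adj u v := by
    intro u v huv ⟨e, heu, hev⟩
    have hcommon : ∃ c, c ∈ lv u ∧ c ∈ lv v := by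
      rcases hown2 u e heu with ⟨c, hc, hce⟩ | ⟨c, hc, hce⟩ <;>
        rcases hown2 v e hev with ⟨c', hc', hce'⟩ | ⟨c', hc', hce'⟩
      · -- both clique
        have heq : D * c + 0 = D * c' + 0 := by
          have := hce.symm.trans hce'
          exact_mod_cast this
        have hcc : c = c' := by
          have hD0 : 0 < D := by simp only [hD]; omega
          exact Nat.eq_of_mul_eq_mul_left hD0 (by omega)
        exact ⟨c, hc, hcc ▸ hc'⟩
      · exfalso
        have heq : D * c + 0 = D * c' + sv v := by
          have := hce.symm.trans hce'
          push_cast at this ⊢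
          omega
        have := key_arith (D := D) (by simp only [hD]; omega) (hsvD v) heq
        have := hsv2 v
        omega
      · exfalso
        have heq : D * c + sv u = D * c' + 0 := by
          have := hce.symm.trans hce'
          push_cast at this ⊢
          omega
        have := key_arith (D := D) (hsvD u) (by simp only [hD]; omega) heq
        have := hsv2 u
        omega
      · have heq : D * c + sv u = D * c' + sv v := by
          have := hce.symm.trans hce'
          push_cast at this ⊢
          omega
        have := key_arith (D := D) (hsvD u) (hsvD v) heq
        exact absurd (hsvinj u v this) huv
    obtain ⟨c, hcu, hcv⟩ := hcommon
    have hcμ : c < μ := ((hmem_lv u c).1 hcu).1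
    have hClique := (hClM c hcμ).1
    exact hClique ((hmem_lv u c).1 hcu).2 ((hmem_lv v c).1 hcv).2 huv
  refine ⟨P, ?_, ?_, ?_⟩
  · -- IsEPGRep
    intro u v huv
    constructor
    · intro hadj
      obtain ⟨C, hC, hsub⟩ := exists_maxClique G {u, v} (isClique_pair' G hadj)
      obtain ⟨i, hi, hieq⟩ := hidx C hC
      refine ⟨cliqueEdge D i, hcov u i ?_, hcov v i ?_⟩
      · exact (hmem_lv u i).2 ⟨hi, by rw [hieq]; exact hsub (by simp)⟩
      · exact (hmem_lv v i).2 ⟨hi, by rw [hieq]; exact hsub (by simp)⟩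
    · exact hinter_adj u v huv
  · -- Helly
    intro T hT
    by_cases hTe : T = ∅
    · exact ⟨⟨(0, 0), true⟩, by intro i hi; rw [hTe] at hi; exact absurd hi (Set.notMem_empty i)⟩
    · have hclT : G.IsClique T := by
        intro x hx y hy hxy
        exact hinter_adj x y hxy (hT x hx y hy)
      obtain ⟨C, hC, hsub⟩ := exists_maxClique G T hclT
      obtain ⟨i, hi, hieq⟩ := hidx C hC
      refine ⟨cliqueEdge D i, fun w hw => hcov w i ?_⟩
      exact (hmem_lv w i).2 ⟨hi, by rw [hieq]; exact hsub hw⟩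
  · -- bends
    intro v
    obtain ⟨a, t, hat⟩ : ∃ a t, lv v = a :: t := by
      cases h : lv v with
      | nil => exact absurd h (hlv_ne v)
      | cons a t => exact ⟨a, t, rfl⟩
    have hbends : (P v).bends = flips (route D (sv v) (lv v)) := mkPath_bends _ _ _
    rw [hbends, hat]
    have hch : (a :: t).Chain' (· < ·) := by rw [← hat]; exact hchain v
    have h1 := flips_route_le (hsv1 v) (hsvD v) a t hch
    have h2 : (a :: t).getLast (List.cons_ne_nil _ _) ∈ (a :: t) := List.getLast_mem _
    have h3 : (a :: t).getLast (List.cons_ne_nil _ _) < μ := by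
      have : (a :: t).getLast (List.cons_ne_nil _ _) ∈ lv v := by rw [hat]; exact h2
      exact ((hmem_lv v _).1 this).1
    omega
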